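/- Let A be a unital C*-algebra, let u and v be unitary elements of A, let σ be a *-automorphism of A with σ(u) = v and σ(v) = u, and set Z = (1/2)(u + v). Let β(Z) = [[Z*Z, Z*√(1 − ZZ*)], [√(1 − ZZ*)·Z, 1 − ZZ*]] and p₂ = [[1,0],[0,0]] in M₂(A). Then there exists a continuous map γ : [0,1] → M₂(A) such that γ(0) = 1 − p₂, γ(1) = β(Z), for every t ∈ [0,1] the matrix γ(t) is a projection, and every entry of γ(t) is fixed by σ. In particular, β(Z) and 1 − p₂ are homotopic through projections whose entries lie in the fixed-point algebra of σ. -/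

import Mathlib

/-!
For a contraction `W` put `s = √(1 - W W*)`. Then `s² = 1 - W W*` and `s` commutes with `W W*`,
and these two identities alone make `β(W)` a self-adjoint idempotent. The path `t ↦ β(t Z)`,
`t ∈ [0, 1]`, runs from `β(0) = 1 - p₂` to `β(Z)`; it is continuous because the square root is
continuous on the positive cone, and its entries are fixed by `σ` because `σ` fixes
`Z = (u + v) / 2` and, like every *-homomorphism, commutes with the continuous functional calculus.
-/

open scoped CStarAlgebra

theorem isStarProjection_fin_two_of_mul_self_eq {R : Type*} [Ring R] [StarRing R] {W s : R}
    (hs : IsSelfAdjoint s) (hss : s * s = 1 - W * star W) (hcomm : Commute s (W * star W)) :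
    IsStarProjection !![star W * W, star W * s; s * W, 1 - W * star W] := by
  have hcomm' : s * (W * star W) = W * star W * s := hcomm.eq
  refine ⟨?_, ?_⟩
  · rw [IsIdempotentElem, Matrix.mul_fin_two]
    ext i j
    fin_cases i <;> fin_cases j <;>
      simp only [Matrix.of_apply, Matrix.cons_val', Matrix.cons_val_zero, Matrix.cons_val_one,
        Matrix.empty_val', Matrix.cons_val_fin_one, Fin.zero_eta, Fin.mk_one]
    · linear_combination (norm := noncomm_ring) star W * hss * W
    · linear_combination (norm := noncomm_ring) -(star W * hcomm')
    · linear_combination (norm := noncomm_ring) hcomm' * W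
    · linear_combination (norm := noncomm_ring) W * star W * hss + hcomm' * s
  · ext i j
    fin_cases i <;> fin_cases j <;> simp [hs.star_eq]

section Unitary

variable {A : Type*} [CStarAlgebra A]

theorem norm_le_one_of_mem_unitary {u : A} (hu : u ∈ unitary A) : ‖u‖ ≤ 1 := by
  nontriviality A
  exact (CStarRing.norm_of_mem_unitary hu).le

theorem norm_half_smul_add_le_one {u v : A} (hu : u ∈ unitary A) (hv : v ∈ unitary A) :
    ‖(1 / 2 : ℝ) • (u + v)‖ ≤ 1 :=
  calc ‖(1 / 2 : ℝ) • (u + v)‖ ≤ (1 / 2 : ℝ) * (‖u‖ + ‖v‖) := by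
        rw [norm_smul, Real.norm_of_nonneg (by norm_num)]
        gcongr
        exact norm_add_le u v
    _ ≤ 1 := by linarith [norm_le_one_of_mem_unitary hu, norm_le_one_of_mem_unitary hv]

end Unitary

section Contraction

variable {A : Type*} [CStarAlgebra A] [PartialOrder A] [StarOrderedRing A]

/-- The matrix `β(W)` of the paper. -/
noncomputable def projOfContraction (W : A) : Matrix (Fin 2) (Fin 2) A :=
  !![star W * W, star W * CFC.sqrt (1 - W * star W);
     CFC.sqrt (1 - W * star W) * W, 1 - W * star W]

theorem one_sub_mul_star_nonneg {W : A} (hW : ‖W‖ ≤ 1) : 0 ≤ 1 - W * star W := by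
  rw [sub_nonneg, ← CStarAlgebra.norm_le_one_iff_of_nonneg _ (mul_star_self_nonneg W),
    CStarRing.norm_self_mul_star]
  exact mul_le_one₀ hW (norm_nonneg W) hW

theorem projOfContraction_zero : projOfContraction (0 : A) = !![0, 0; 0, 1] := by
  simp [projOfContraction]

theorem isStarProjection_projOfContraction {W : A} (hW : ‖W‖ ≤ 1) :
    IsStarProjection (projOfContraction W) :=
  have := one_sub_mul_star_nonneg hW
  isStarProjection_fin_two_of_mul_self_eq (CFC.sqrt_nonneg _).isSelfAdjoint
    (CFC.sqrt_mul_sqrt_self _)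
    (((Commute.one_left _).sub_left (Commute.refl _)).cfcₙ_nnreal NNReal.sqrt)

theorem continuousOn_projOfContraction :
    ContinuousOn (projOfContraction (A := A)) (Metric.closedBall 0 1) := by
  have hsqrt : ContinuousOn (fun W : A ↦ CFC.sqrt (1 - W * star W)) (Metric.closedBall 0 1) :=
    ContinuousOn.cfcₙ_nnreal_of_mem_nhdsSet (s := Set.univ) NNReal.sqrt Filter.univ_mem
      (by fun_prop) fun W hW ↦ one_sub_mul_star_nonneg (by simpa using hW)
  refine continuousOn_pi.2 fun i ↦ continuousOn_pi.2 fun j ↦ ?_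
  fin_cases i <;> fin_cases j
  · exact (continuous_star.mul continuous_id).continuousOn
  · exact continuousOn_star.mul hsqrt
  · exact hsqrt.mul continuousOn_id
  · exact (continuous_const.sub (continuous_id.mul continuous_star)).continuousOn

theorem map_projOfContraction {B F : Type*} [CStarAlgebra B] [PartialOrder B]
    [StarOrderedRing B] [FunLike F A B] [AlgHomClass F ℂ A B] [StarHomClass F A B]
    (φ : F) {W : A} (hW : ‖W‖ ≤ 1) :
    (projOfContraction W).map φ = projOfContraction (φ W) := by
  have hnonneg := one_sub_mul_star_nonneg hW
  have hsqrt : φ (CFC.sqrt (1 - W * star W)) = CFC.sqrt (1 - φ W * star (φ W)) := by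
    rw [← map_star, ← map_mul, ← map_one φ, ← map_sub]
    exact NonUnitalStarAlgHomClass.map_cfcₙ (S := ℂ) φ NNReal.sqrt _ (hφa := map_nonneg φ hnonneg)
  ext i j
  fin_cases i <;> fin_cases j <;> simp [projOfContraction, hsqrt, map_star]

end Contraction

theorem beta_homotopic_to_one_sub_p2_within_fixed_point_algebra
    {A : Type*} [CStarAlgebra A] [PartialOrder A] [StarOrderedRing A]
    (u v : A) (hu : u ∈ unitary A) (hv : v ∈ unitary A)
    (σ : A ≃⋆ₐ[ℂ] A) (hσu : σ u = v) (hσv : σ v = u)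
    (Z : A) (hZ : Z = (1 / 2 : ℝ) • (u + v))
    (β p₂ : Matrix (Fin 2) (Fin 2) A)
    (hβ : β = !![star Z * Z, star Z * CFC.sqrt (1 - Z * star Z);
                 CFC.sqrt (1 - Z * star Z) * Z, 1 - Z * star Z])
    (hp : p₂ = !![1, 0; 0, 0]) :
    ∃ γ : ℝ → Matrix (Fin 2) (Fin 2) A,
      ContinuousOn γ (Set.Icc 0 1) ∧
      γ 0 = 1 - p₂ ∧ γ 1 = β ∧
      (∀ t ∈ Set.Icc (0 : ℝ) 1,
        (star (γ t) = γ t ∧ γ t * γ t = γ t) ∧ ∀ i j, σ (γ t i j) = γ t i j) := by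
  have hZ_norm : ‖Z‖ ≤ 1 := hZ ▸ norm_half_smul_add_le_one hu hv
  have hσZ : σ Z = Z := by
    rw [hZ, map_real_smul σ (map_continuous σ), map_add, hσu, hσv, add_comm]
  have hnorm : ∀ t ∈ Set.Icc (0 : ℝ) 1, ‖t • Z‖ ≤ 1 := fun t ⟨ht₀, ht₁⟩ ↦ by
    simpa [norm_smul, abs_of_nonneg ht₀] using mul_le_one₀ ht₁ (norm_nonneg Z) hZ_norm
  refine ⟨fun t ↦ projOfContraction (t • Z),
    continuousOn_projOfContraction.comp (by fun_prop)
      fun t ht ↦ mem_closedBall_zero_iff.2 (hnorm t ht), ?_, ?_, fun t ht ↦ ?_⟩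
  · dsimp only
    rw [zero_smul, projOfContraction_zero, hp, Matrix.one_fin_two]
    simp
  · dsimp only
    rw [one_smul, hβ, projOfContraction]
  · obtain ⟨hidem, hsa⟩ := isStarProjection_projOfContraction (hnorm t ht)
    refine ⟨⟨hsa, hidem⟩, fun i j ↦ ?_⟩
    rw [← Matrix.map_apply (f := σ), map_projOfContraction σ (hnorm t ht), map_real_smul σ
      (map_continuous σ), hσZ]
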